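/- arXiv:1312.3416 — 4 statements merged into one kernel-verified Lean document; each statement's English description precedes it below -/
import Mathlib

section
/- If global states C and C'' are permutations of each other, then for every global state C', the product transition probabilities agree: Π_{n=1}^N K(m)_{C[n], C'[n]} summed over all C' with a fixed occupancy measure m' equals the same sum with C replaced by C''. Consequently the occupancy-measure process transition probability Pr{M(t+1)=m' | M(t)=m} = Σ_{C': M(C')=m'} P_{C,C'} is well-defined, i.e., independent of the representative C with M(C) = m. -/
/-!
Relabelling the particles by `σ` does not change the occupancy measure, so `C' ↦ C' ∘ σ⁻¹`
permutes every fibre `{C' | M C' = m'}`; reindexing the product by `σ` turns `P (C ∘ σ) C'`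
into `P C (C' ∘ σ⁻¹)`.
-/

open scoped Classical
open Finset

section Occupancy

variable {ι S : Type*} [Fintype ι]

theorem occupancy_comp_perm {M : (ι → S) → S → ℝ} {w : ℝ}
    (hM : ∀ C c, M C c = w * ∑ n, if C n = c then 1 else 0)
    (σ : Equiv.Perm ι) (C : ι → S) :
    M (C ∘ σ) = M C := by
  funext c
  rw [hM, hM]
  congr 1
  exact Equiv.sum_comp σ (fun n => if C n = c then (1 : ℝ) else 0)

theorem sum_filter_comp_perm [DecidableEq ι] [Fintype S] {β : Type*} [DecidableEq β]
    (M : (ι → S) → β) (σ : Equiv.Perm ι) (hM : ∀ C, M (C ∘ σ) = M C) (f : (ι → S) → ℝ) (m' : β) :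
    ∑ C' ∈ univ.filter (fun C' => M C' = m'), f (C' ∘ σ) =
      ∑ C' ∈ univ.filter (fun C' => M C' = m'), f C' := by
  simp only [sum_filter]
  refine Fintype.sum_equiv (σ.arrowCongr (Equiv.refl S)).symm _ _ fun C' => ?_
  simp [Equiv.arrowCongr, hM]

end Occupancy

theorem stmt_4_general {S : Type*} [Fintype S] (N : ℕ)
    (K : (S → ℝ) → S → S → ℝ)
    (M : (Fin N → S) → (S → ℝ))
    (hM : ∀ C c, M C c = (1 / (N : ℝ)) * ∑ n : Fin N, if C n = c then 1 else 0)
    (P : (Fin N → S) → (Fin N → S) → ℝ)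
    (hP : ∀ C C', P C C' = ∏ n : Fin N, K (M C) (C n) (C' n))
    (C C'' : Fin N → S)
    (hperm : ∃ σ : Equiv.Perm (Fin N), ∀ n, C'' n = C (σ n)) :
    ∀ m' : S → ℝ,
      ∑ C' ∈ Finset.univ.filter (fun C' : Fin N → S => M C' = m'), P C C' =
      ∑ C' ∈ Finset.univ.filter (fun C' : Fin N → S => M C' = m'), P C'' C' := by
  obtain ⟨σ, hσ⟩ := hperm
  have hC'' : C'' = C ∘ σ := funext hσ
  have hP'' : ∀ C', P C'' C' = P C (C' ∘ σ.symm) := by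
    intro C'
    rw [hP, hP, hC'', occupancy_comp_perm hM]
    simpa using (Equiv.prod_comp σ.symm fun n => K (M C) (C (σ n)) (C' n)).symm
  intro m'
  simp only [hP'']
  exact (sum_filter_comp_perm M σ.symm (occupancy_comp_perm hM σ.symm) (P C) m').symm

/-- if `C` and `C''` are permutations of each other, the sum of
product transition probabilities towards any fixed occupancy measure `m'`
agrees, so the occupancy-measure process transition probability is
well-defined. -/
theorem stmt_4 {S : Type*} [Fintype S] (N : ℕ) (hN : 0 < N)
    (K : (S → ℝ) → S → S → ℝ)
    (M : (Fin N → S) → (S → ℝ))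
    (hM : ∀ C c, M C c = (1 / (N : ℝ)) * ∑ n : Fin N, if C n = c then 1 else 0)
    (P : (Fin N → S) → (Fin N → S) → ℝ)
    (hP : ∀ C C', P C C' = ∏ n : Fin N, K (M C) (C n) (C' n))
    (C C'' : Fin N → S)
    (hperm : ∃ σ : Equiv.Perm (Fin N), ∀ n, C'' n = C (σ n)) :
    ∀ m' : S → ℝ,
      ∑ C' ∈ Finset.univ.filter (fun C' : Fin N → S => M C' = m'), P C C' =
      ∑ C' ∈ Finset.univ.filter (fun C' : Fin N → S => M C' = m'), P C'' C' :=
  stmt_4_general N K M hM P hP C C'' hperm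
end

section
/- Marginalizing the projected matrix H^(N) over the occupancy component recovers the object matrix: for any C with H(C) = ⟨c,m⟩ and any local state c', Σ_{m'} H^(N)_{⟨c,m⟩,⟨c',m'⟩} = K(m)_{c,c'}. -/
open scoped Classical
open Finset

/- The fibre `{x | x i = c}` of a product space is a box `∏ n, t n` with `t i = {c}` and all other
sides full, so the sum of a product weight over it factorises; every factor but the `i`-th is a
row sum, hence `1`. -/
theorem sum_prod_filter_apply_eq_of_sum_eq_one {ι β R : Type*} [Fintype ι] [DecidableEq ι]
    [Fintype β] [DecidableEq β] [CommSemiring R] (f : ι → β → R) (i : ι) (c : β)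
    (hf : ∀ n, ∑ b, f n b = 1) :
    ∑ x ∈ univ.filter (fun x : ι → β => x i = c), ∏ n, f n (x n) = f i c := by
  rw [← Fintype.piFinset_univ (β := fun _ => β),
    ← Fintype.piFinset_update_singleton_eq_filter_piFinset_eq (fun _ => univ) i (mem_univ c),
    ← prod_univ_sum, prod_eq_single i]
  · simp
  · intro n _ hn
    simp [Function.update_of_ne hn, hf]
  · simp

theorem stmt_7_general {S : Type*} [Fintype S] (N : ℕ) (hN : 0 < N)
    (K : (S → ℝ) → S → S → ℝ)
    (hK : ∀ m, (∀ i j, 0 ≤ K m i j) ∧ ∀ i, ∑ j, K m i j = 1)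
    (M : (Fin N → S) → (S → ℝ))
    (P : (Fin N → S) → (Fin N → S) → ℝ)
    (hP : ∀ C C', P C C' = ∏ n : Fin N, K (M C) (C n) (C' n))
    (H : (Fin N → S) → S × (S → ℝ))
    (hH : ∀ C, H C = (C ⟨0, hN⟩, M C))
    (Hmat : (S × (S → ℝ)) → (S × (S → ℝ)) → ℝ)
    (hHmat : ∀ (C : Fin N → S) (c' : S) (m' : S → ℝ),
      Hmat (H C) (c', m') =
        ∑ C' ∈ Finset.univ.filter (fun C' : Fin N → S => H C' = (c', m')), P C C') :
    ∀ (C : Fin N → S) (c' : S),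
      ∑ m' ∈ (Finset.univ.filter
          (fun C' : Fin N → S => C' ⟨0, hN⟩ = c')).image M,
        Hmat (H C) (c', m') = K (M C) (C ⟨0, hN⟩) c' := by
  intro C c'
  set fibre := univ.filter (fun C' : Fin N → S => C' ⟨0, hN⟩ = c')
  have hHmat_fibre : ∀ m', Hmat (H C) (c', m') = ∑ C' ∈ fibre with M C' = m', P C C' := by
    intro m'
    rw [hHmat, filter_filter]
    simp only [hH, Prod.mk.injEq]
  simp only [hHmat_fibre]
  rw [sum_fiberwise_of_maps_to (fun _ => mem_image_of_mem M)]
  simp only [hP]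
  exact sum_prod_filter_apply_eq_of_sum_eq_one _ _ _ fun n => (hK (M C)).2 (C n)

/-- marginalizing the projected matrix `H^(N)` over the occupancy
component recovers the object matrix `K`. -/
theorem stmt_7 {S : Type*} [Fintype S] (N : ℕ) (hN : 0 < N)
    (K : (S → ℝ) → S → S → ℝ)
    (hK : ∀ m, (∀ i j, 0 ≤ K m i j) ∧ ∀ i, ∑ j, K m i j = 1)
    (M : (Fin N → S) → (S → ℝ))
    (hM : ∀ C c, M C c = (1 / (N : ℝ)) * ∑ n : Fin N, if C n = c then 1 else 0)
    (P : (Fin N → S) → (Fin N → S) → ℝ)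
    (hP : ∀ C C', P C C' = ∏ n : Fin N, K (M C) (C n) (C' n))
    (H : (Fin N → S) → S × (S → ℝ))
    (hH : ∀ C, H C = (C ⟨0, hN⟩, M C))
    (Hmat : (S × (S → ℝ)) → (S × (S → ℝ)) → ℝ)
    (hHmat : ∀ (C : Fin N → S) (c' : S) (m' : S → ℝ),
      Hmat (H C) (c', m') =
        ∑ C' ∈ Finset.univ.filter (fun C' : Fin N → S => H C' = (c', m')), P C C') :
    ∀ (C : Fin N → S) (c' : S),
      ∑ m' ∈ (Finset.univ.filter
          (fun C' : Fin N → S => C' ⟨0, hN⟩ = c')).image M,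
        Hmat (H C) (c', m') = K (M C) (C ⟨0, hN⟩) c' :=
  stmt_7_general N hN K hK M P hP H hH Hmat hHmat
end

section
/- Let surjection H : S → T between finite state sets be a lumping for row-stochastic matrix P on S, i.e., whenever H(s₁)=H(s₂), then for all t' ∈ T, Σ_{s': H(s')=t'} P_{s₁,s'} = Σ_{s': H(s')=t'} P_{s₂,s'}, and let the labelling satisfy ℓ_S(s) = ℓ_T(H(s)). Then for every bounded PCTL formula Φ and state s ∈ S: s ⊨_S Φ iff H(s) ⊨_T Φ, where T carries the induced quotient matrix Q_{t,t'} = Σ_{s': H(s')=t'} P_{s,s'} for any s with H(s)=t. -/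
/-!
Since the successor distribution of `s`, pushed forward along `H`, is the row `Q (H s)`, any
expectation of a function factoring through `H` is the same upstairs and downstairs. By induction
on the formula, every satisfaction set on `S` is the preimage of the one on `T`, so the
next-step and bounded-until probabilities are such expectations.
-/

open scoped Classical
open Finset

/-- Syntax of bounded PCTL over atomic propositions `AP`. -/
inductive PCTL (AP : Type*) where
  | atom (a : AP)
  | neg (Φ : PCTL AP)
  | or (Φ₁ Φ₂ : PCTL AP)
  | probNext (rel : ℝ → ℝ → Prop) (p : ℝ) (Φ : PCTL AP)
  | probUntil (rel : ℝ → ℝ → Prop) (p : ℝ) (k : ℕ) (Φ₁ Φ₂ : PCTL AP)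

/-- Bounded-until satisfaction probability with satisfaction sets `A`, `B`. -/
noncomputable def fU {S : Type*} [Fintype S] (P : S → S → ℝ) (A B : Set S) :
    ℕ → S → ℝ
  | 0, s => if s ∈ B then 1 else 0
  | k + 1, s =>
      if s ∈ B then 1
      else if s ∈ A then ∑ s' : S, P s s' * fU P A B k s'
      else 0

/-- Satisfaction of bounded PCTL on a labelled DTMC `(P, ℓ)`; path
probabilities are the ones generated by the row-stochastic matrix `P`. -/
noncomputable def sat {S : Type*} [Fintype S] {AP : Type*}
    (P : S → S → ℝ) (ℓ : S → Set AP) : PCTL AP → S → Prop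
  | .atom a, s => a ∈ ℓ s
  | .neg Φ, s => ¬ sat P ℓ Φ s
  | .or Φ₁ Φ₂, s => sat P ℓ Φ₁ s ∨ sat P ℓ Φ₂ s
  | .probNext rel p Φ, s =>
      rel (∑ s' ∈ Finset.univ.filter (fun s' => sat P ℓ Φ s'), P s s') p
  | .probUntil rel p k Φ₁ Φ₂, s =>
      rel (fU P {s' | sat P ℓ Φ₁ s'} {s' | sat P ℓ Φ₂ s'} k s) p

section Lumping

variable {S T : Type*} [Fintype S] [Fintype T]

def IsQuotientMatrix (P : S → S → ℝ) (H : S → T) (Q : T → T → ℝ) : Prop :=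
  ∀ (s : S) (t' : T), Q (H s) t' = ∑ s' ∈ univ.filter (fun s' => H s' = t'), P s s'

variable {P : S → S → ℝ} {H : S → T} {Q : T → T → ℝ}

theorem IsQuotientMatrix.sum_mul_comp (hQ : IsQuotientMatrix P H Q) (g : T → ℝ) (s : S) :
    ∑ s', P s s' * g (H s') = ∑ t', Q (H s) t' * g t' := by
  rw [← sum_fiberwise univ H (fun s' => P s s' * g (H s'))]
  refine sum_congr rfl fun t' _ => ?_
  rw [hQ, sum_mul]
  refine sum_congr rfl fun s' hs' => ?_
  rw [(mem_filter.mp hs').2]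

theorem IsQuotientMatrix.sum_filter_preimage (hQ : IsQuotientMatrix P H Q) (A : Set T) (s : S) :
    ∑ s' ∈ univ.filter (fun s' => H s' ∈ A), P s s' = ∑ t' ∈ univ.filter (· ∈ A), Q (H s) t' := by
  simpa only [sum_filter, mul_ite, mul_one, mul_zero] using
    hQ.sum_mul_comp (fun t' => if t' ∈ A then 1 else 0) s

theorem IsQuotientMatrix.fU_preimage (hQ : IsQuotientMatrix P H Q) (A B : Set T) (k : ℕ) (s : S) :
    fU P (H ⁻¹' A) (H ⁻¹' B) k s = fU Q A B k (H s) := by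
  induction k generalizing s with
  | zero => simp only [fU, Set.mem_preimage]
  | succ k ih =>
    simp only [fU, Set.mem_preimage]
    congr 2
    rw [← hQ.sum_mul_comp]
    exact sum_congr rfl fun s' _ => by rw [ih s']

theorem IsQuotientMatrix.setOf_sat_eq_preimage {AP : Type*} (hQ : IsQuotientMatrix P H Q)
    {ℓS : S → Set AP} {ℓT : T → Set AP} (hlab : ∀ s, ℓS s = ℓT (H s)) (Φ : PCTL AP) :
    {s | sat P ℓS Φ s} = H ⁻¹' {t | sat Q ℓT Φ t} := by
  ext s
  show sat P ℓS Φ s ↔ sat Q ℓT Φ (H s)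
  induction Φ generalizing s with
  | atom a => rw [sat, sat, hlab s]
  | neg Φ ih => exact not_congr (ih s)
  | or Φ₁ Φ₂ ih₁ ih₂ => exact or_congr (ih₁ s) (ih₂ s)
  | probNext rel p Φ ih =>
    have hfilter : univ.filter (fun s' => sat P ℓS Φ s') =
        univ.filter (fun s' => H s' ∈ {t | sat Q ℓT Φ t}) :=
      filter_congr fun s' _ => ih s'
    rw [sat, sat, hfilter, hQ.sum_filter_preimage]
    rfl
  | probUntil rel p k Φ₁ Φ₂ ih₁ ih₂ =>
    have hsat (Ψ : PCTL AP) (ih : ∀ s, sat P ℓS Ψ s ↔ sat Q ℓT Ψ (H s)) :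
        {s | sat P ℓS Ψ s} = H ⁻¹' {t | sat Q ℓT Ψ t} :=
      Set.ext ih
    rw [sat, sat, hsat Φ₁ ih₁, hsat Φ₂ ih₂, hQ.fU_preimage]

end Lumping

theorem stmt_10_general {S T : Type*} [Fintype S] [Fintype T] {AP : Type*}
    (P : S → S → ℝ)
    (H : S → T)
    (Q : T → T → ℝ)
    (hQ : ∀ (s : S) (t' : T),
      Q (H s) t' = ∑ s' ∈ Finset.univ.filter (fun s' => H s' = t'), P s s')
    (ℓS : S → Set AP) (ℓT : T → Set AP)
    (hlab : ∀ s, ℓS s = ℓT (H s)) :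
    ∀ (Φ : PCTL AP) (s : S), sat P ℓS Φ s ↔ sat Q ℓT Φ (H s) :=
  fun Φ => Set.ext_iff.mp (IsQuotientMatrix.setOf_sat_eq_preimage hQ hlab Φ)

/-- Lemma 1 of the paper: a lumping `H` compatible with the
labelling preserves satisfaction of every bounded PCTL formula. -/
theorem stmt_10 {S T : Type*} [Fintype S] [Fintype T] {AP : Type*}
    (P : S → S → ℝ)
    (hPnonneg : ∀ i j, 0 ≤ P i j) (hProw : ∀ i, ∑ j, P i j = 1)
    (H : S → T) (hsurj : Function.Surjective H)
    (hlump : ∀ s₁ s₂, H s₁ = H s₂ → ∀ t' : T,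
      ∑ s' ∈ Finset.univ.filter (fun s' => H s' = t'), P s₁ s' =
      ∑ s' ∈ Finset.univ.filter (fun s' => H s' = t'), P s₂ s')
    (Q : T → T → ℝ)
    (hQ : ∀ (s : S) (t' : T),
      Q (H s) t' = ∑ s' ∈ Finset.univ.filter (fun s' => H s' = t'), P s s')
    (ℓS : S → Set AP) (ℓT : T → Set AP)
    (hlab : ∀ s, ℓS s = ℓT (H s)) :
    ∀ (Φ : PCTL AP) (s : S), sat P ℓS Φ s ↔ sat Q ℓT Φ (H s) :=
  stmt_10_general P H Q hQ ℓS ℓT hlab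
end

section
/- For the Next operator modulo lumping: if H : S → T is a lumping for P with quotient Q and sat ⊆ S satisfies s' ∈ sat ↔ H(s') ∈ satT for some satT ⊆ T, then for every s ∈ S, Σ_{s' ∈ sat} P_{s,s'} = Σ_{t' ∈ satT} Q_{H(s),t'}. Hence s ⊨ P_{⋈p}(X Φ) iff H(s) ⊨ P_{⋈p}(X Φ). -/
open scoped Classical
open Finset

theorem stmt_12_general {S T : Type*} [Fintype S] [Fintype T]
    (P : S → S → ℝ)
    (H : S → T)
    (Q : T → T → ℝ)
    (hQ : ∀ (s : S) (t' : T),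
      Q (H s) t' = ∑ s' ∈ Finset.univ.filter (fun s' => H s' = t'), P s s')
    (sat : Set S) (satT : Set T)
    (hsat : ∀ s', s' ∈ sat ↔ H s' ∈ satT)
    (rel : ℝ → ℝ → Prop) (p : ℝ) :
    ∀ s : S,
      (∑ s' ∈ Finset.univ.filter (fun s' => s' ∈ sat), P s s' =
        ∑ t' ∈ Finset.univ.filter (fun t' => t' ∈ satT), Q (H s) t') ∧
      (rel (∑ s' ∈ Finset.univ.filter (fun s' => s' ∈ sat), P s s') p ↔
        rel (∑ t' ∈ Finset.univ.filter (fun t' => t' ∈ satT), Q (H s) t') p) := by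
  intro s
  -- `sat` is the union of the fibres of `H` over `satT`, and `Q (H s)` sums `P s` over one fibre.
  have hnext : ∑ s' ∈ univ.filter (fun s' => s' ∈ sat), P s s' =
      ∑ t' ∈ univ.filter (fun t' => t' ∈ satT), Q (H s) t' := by
    simp only [hQ, hsat]
    convert (sum_fiberwise_eq_sum_filter univ (univ.filter (· ∈ satT)) H (P s)).symm using 2
    simp
  exact ⟨hnext, by rw [hnext]⟩

/-- the Next operator modulo lumping: one-step probabilities into
compatible satisfaction sets agree, hence satisfaction of `P_{⋈p}(X Φ)` is
preserved by the abstraction. -/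
theorem stmt_12 {S T : Type*} [Fintype S] [Fintype T]
    (P : S → S → ℝ)
    (hPnonneg : ∀ i j, 0 ≤ P i j) (hProw : ∀ i, ∑ j, P i j = 1)
    (H : S → T) (hsurj : Function.Surjective H)
    (hlump : ∀ s₁ s₂, H s₁ = H s₂ → ∀ t' : T,
      ∑ s' ∈ Finset.univ.filter (fun s' => H s' = t'), P s₁ s' =
      ∑ s' ∈ Finset.univ.filter (fun s' => H s' = t'), P s₂ s')
    (Q : T → T → ℝ)
    (hQ : ∀ (s : S) (t' : T),
      Q (H s) t' = ∑ s' ∈ Finset.univ.filter (fun s' => H s' = t'), P s s')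
    (sat : Set S) (satT : Set T)
    (hsat : ∀ s', s' ∈ sat ↔ H s' ∈ satT)
    (rel : ℝ → ℝ → Prop) (p : ℝ) :
    ∀ s : S,
      (∑ s' ∈ Finset.univ.filter (fun s' => s' ∈ sat), P s s' =
        ∑ t' ∈ Finset.univ.filter (fun t' => t' ∈ satT), Q (H s) t') ∧
      (rel (∑ s' ∈ Finset.univ.filter (fun s' => s' ∈ sat), P s s') p ↔
        rel (∑ t' ∈ Finset.univ.filter (fun t' => t' ∈ satT), Q (H s) t') p) :=
  stmt_12_general P H Q hQ sat satT hsat rel p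
end
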